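/- The effective Hamiltonian satisfies H̄(0) = 0; i.e., for p = 0 the unique constant λ for which the cell problem admits a smooth ℤᵈ-periodic solution is λ = 0. -/

import Mathlib

/-!
Multiply the first cell equation by `e^{-φ¹}` and the second by `e^{-φ²}` and add: the coupling
terms `ν² e^{-φ²}` and `ν¹ e^{-φ¹}` cancel, and for `p = 0` what remains is the divergence form
`div W = λ (e^{-φ¹} + e^{-φ²})` with the periodic flux `W = e^{-φ¹} (Dψ - Dφ¹) - e^{-φ²} Dφ²`.
By the divergence theorem and periodicity, `div W` integrates to zero over the unit cube, while
`e^{-φ¹} + e^{-φ²}` has positive integral; hence `λ = 0`.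
-/

open MeasureTheory Filter Set
open scoped Topology

noncomputable section

/-- `ℝᵈ` as a Euclidean space. -/
abbrev Euc (d : ℕ) := EuclideanSpace ℝ (Fin d)

/-- `ℤᵈ`-periodicity of a function on `ℝᵈ`. -/
def ZPer {d : ℕ} (f : Euc d → ℝ) : Prop :=
  ∀ (x : Euc d) (k : Fin d → ℤ),
    f (x + (EuclideanSpace.equiv (Fin d) ℝ).symm (fun i => (k i : ℝ))) = f x

/-- The Laplacian of a scalar function on `ℝᵈ`. -/
def lap {d : ℕ} (f : Euc d → ℝ) (x : Euc d) : ℝ :=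
  ∑ i : Fin d,
    fderiv ℝ (fun y => fderiv ℝ f y (EuclideanSpace.single i 1)) x (EuclideanSpace.single i 1)

/-- The divergence of a vector field on `ℝᵈ`. -/
def dvg {d : ℕ} (F : Euc d → Euc d) (x : Euc d) : ℝ :=
  ∑ i : Fin d, fderiv ℝ (fun y => F y i) x (EuclideanSpace.single i 1)

/-- The data `ψ, ν¹, ν²` are smooth, `ℤᵈ`-periodic, with `ν¹ > 0`, `ν² > 0`. -/
def GoodData {d : ℕ} (ψ ν1 ν2 : Euc d → ℝ) : Prop :=
  ContDiff ℝ (⊤ : ℕ∞) ψ ∧ ContDiff ℝ (⊤ : ℕ∞) ν1 ∧ ContDiff ℝ (⊤ : ℕ∞) ν2 ∧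
  ZPer ψ ∧ ZPer ν1 ∧ ZPer ν2 ∧ (∀ y, 0 < ν1 y) ∧ (∀ y, 0 < ν2 y)

/-- `(n1, n2)` is a classical solution of the weakly coupled Fokker–Planck system
`∂ₜn¹ − εΔn¹ − div(n¹ Dψ(x/ε)) + ε⁻¹ν¹(x/ε)n¹ = ε⁻¹ν²(x/ε)n²`,
`∂ₜn² − εΔn² + ε⁻¹ν²(x/ε)n² = ε⁻¹ν¹(x/ε)n¹` on `ℝᵈ × (0,∞)`,
continuous up to `t = 0`. -/
def IsFP {d : ℕ} (ψ ν1 ν2 : Euc d → ℝ) (ε : ℝ) (n1 n2 : Euc d → ℝ → ℝ) : Prop :=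
  ContinuousOn (fun q : Euc d × ℝ => n1 q.1 q.2) (univ ×ˢ Ici 0) ∧
  ContinuousOn (fun q : Euc d × ℝ => n2 q.1 q.2) (univ ×ˢ Ici 0) ∧
  ContDiffOn ℝ (⊤ : ℕ∞) (fun q : Euc d × ℝ => n1 q.1 q.2) (univ ×ˢ Ioi 0) ∧
  ContDiffOn ℝ (⊤ : ℕ∞) (fun q : Euc d × ℝ => n2 q.1 q.2) (univ ×ˢ Ioi 0) ∧
  (∀ (x : Euc d) (t : ℝ), 0 < t →
    deriv (fun s => n1 x s) t - ε * lap (fun y => n1 y t) x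
      - dvg (fun y => n1 y t • gradient ψ (ε⁻¹ • y)) x
      + ε⁻¹ * ν1 (ε⁻¹ • x) * n1 x t = ε⁻¹ * ν2 (ε⁻¹ • x) * n2 x t) ∧
  (∀ (x : Euc d) (t : ℝ), 0 < t →
    deriv (fun s => n2 x s) t - ε * lap (fun y => n2 y t) x
      + ε⁻¹ * ν2 (ε⁻¹ • x) * n2 x t = ε⁻¹ * ν1 (ε⁻¹ • x) * n1 x t)

/-- `(φ1, φ2)` is a smooth `ℤᵈ`-periodic solution of the cell problem at `p` with constant `lam`:
`−Δφ¹ + |Dφ¹+p|² − Dψ·(Dφ¹+p) + Δψ + ν² e^{φ¹−φ²} = ν¹ + λ`,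
`−Δφ² + |Dφ²+p|² + ν¹ e^{φ²−φ¹} = ν² + λ`. -/
def IsCellSol {d : ℕ} (ψ ν1 ν2 : Euc d → ℝ) (p : Euc d) (lam : ℝ) (φ1 φ2 : Euc d → ℝ) : Prop :=
  ContDiff ℝ (⊤ : ℕ∞) φ1 ∧ ContDiff ℝ (⊤ : ℕ∞) φ2 ∧ ZPer φ1 ∧ ZPer φ2 ∧
  (∀ y, -lap φ1 y + ‖gradient φ1 y + p‖ ^ 2
      - (@inner ℝ _ _ (gradient ψ y) (gradient φ1 y + p)) + lap ψ y
      + ν2 y * Real.exp (φ1 y - φ2 y) = ν1 y + lam) ∧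
  (∀ y, -lap φ2 y + ‖gradient φ2 y + p‖ ^ 2
      + ν1 y * Real.exp (φ2 y - φ1 y) = ν2 y + lam)

section Calculus

variable {d : ℕ}

theorem gradient_apply_eq_fderiv (f : Euc d → ℝ) (y : Euc d) (i : Fin d) :
    gradient f y i = fderiv ℝ f y (EuclideanSpace.single i 1) := by
  rw [← inner_gradient_left, EuclideanSpace.inner_single_right]
  simp

theorem ContDiff.gradient {n : WithTop ℕ∞} {f : Euc d → ℝ} (hf : ContDiff ℝ (n + 1) f) :
    ContDiff ℝ n (gradient f) :=
  (contDiff_piLp 2).2 fun i => by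
    simp_rw [gradient_apply_eq_fderiv]
    exact (hf.fderiv_right le_rfl).clm_apply contDiff_const

theorem gradient_exp_neg {f : Euc d → ℝ} {x : Euc d} (hf : DifferentiableAt ℝ f x) :
    gradient (fun y => Real.exp (-f y)) x = -(Real.exp (-f x) • gradient f x) := by
  ext i
  rw [PiLp.neg_apply, PiLp.smul_apply, gradient_apply_eq_fderiv, gradient_apply_eq_fderiv,
    hf.hasFDerivAt.fun_neg.exp.fderiv]
  simp

theorem dvg_gradient (f : Euc d → ℝ) : dvg (gradient f) = lap f := by
  ext x
  simp only [dvg, lap, gradient_apply_eq_fderiv]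

theorem dvg_sub {F G : Euc d → Euc d} {x : Euc d} (hF : DifferentiableAt ℝ F x)
    (hG : DifferentiableAt ℝ G x) : dvg (F - G) x = dvg F x - dvg G x := by
  simp only [dvg, ← Finset.sum_sub_distrib, Pi.sub_apply, PiLp.sub_apply]
  refine Finset.sum_congr rfl fun i _ => ?_
  rw [fderiv_fun_sub ((differentiableAt_piLp 2).1 hF i) ((differentiableAt_piLp 2).1 hG i)]
  rfl

theorem dvg_smul {g : Euc d → ℝ} {F : Euc d → Euc d} {x : Euc d} (hg : DifferentiableAt ℝ g x)
    (hF : DifferentiableAt ℝ F x) :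
    dvg (fun y => g y • F y) x = g x * dvg F x + inner ℝ (gradient g x) (F x) := by
  simp only [dvg, PiLp.smul_apply, smul_eq_mul, Finset.mul_sum, PiLp.inner_apply,
    RCLike.inner_apply, conj_trivial, gradient_apply_eq_fderiv, ← Finset.sum_add_distrib]
  refine Finset.sum_congr rfl fun i _ => ?_
  rw [fderiv_fun_mul hg ((differentiableAt_piLp 2).1 hF i)]
  simp only [add_apply, smul_apply, smul_eq_mul]

theorem ContDiff.continuous_dvg {F : Euc d → Euc d} (hF : ContDiff ℝ 1 F) :
    Continuous (dvg F) :=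
  continuous_finsetSum _ fun i _ =>
    (((contDiff_piLp 2).1 hF i).continuous_fderiv one_ne_zero).clm_apply continuous_const

end Calculus

section Periodic

variable {d : ℕ}

theorem ZPer.fderiv {f : Euc d → ℝ} (hper : ZPer f) (x : Euc d) (k : Fin d → ℤ) :
    fderiv ℝ f (x + (EuclideanSpace.equiv (Fin d) ℝ).symm (fun i => (k i : ℝ))) =
      fderiv ℝ f x := by
  rw [← fderiv_comp_add_right, funext fun y => hper y k]

theorem ZPer.gradient {f : Euc d → ℝ} (hper : ZPer f) (x : Euc d) (k : Fin d → ℤ) :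
    gradient f (x + (EuclideanSpace.equiv (Fin d) ℝ).symm (fun i => (k i : ℝ))) =
      gradient f x := by
  rw [_root_.gradient, hper.fderiv, ← _root_.gradient]

theorem Fin.insertNth_add_eq_insertNth_add_single {M : Type*} [AddZeroClass M] {n : ℕ}
    (i : Fin (n + 1)) (a b : M) (x : Fin n → M) :
    Fin.insertNth (α := fun _ => M) i (a + b) x = Fin.insertNth i a x + Pi.single i b := by
  refine Fin.insertNth_eq_iff.2 ⟨by simp, ?_⟩
  ext j
  simp [Fin.removeNth]

theorem integral_unitCube_dvg_eq_zero_of_zPer {F : Euc d → Euc d} (hF : ContDiff ℝ 1 F)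
    (hper : ∀ i, ZPer fun y => F y i) :
    ∫ x in Icc (0 : Fin d → ℝ) 1, dvg F ((EuclideanSpace.equiv (Fin d) ℝ).symm x) = 0 := by
  cases d with
  | zero => simp [dvg]
  | succ n =>
    set e := EuclideanSpace.equiv (Fin (n + 1)) ℝ
    have hFi : ∀ i, ContDiff ℝ 1 fun y => F y i := (contDiff_piLp 2).1 hF
    have hderiv : ∀ i x, HasFDerivAt (fun x => F (e.symm x) i)
        ((fderiv ℝ (fun y => F y i) (e.symm x)).comp (e.symm : (Fin (n + 1) → ℝ) →L[ℝ] _)) x :=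
      fun i x => ((hFi i).differentiable one_ne_zero _).hasFDerivAt.comp x e.symm.hasFDerivAt
    have hdvg : ∀ x, ∑ i, ((fderiv ℝ (fun y => F y i) (e.symm x)).comp
        (e.symm : (Fin (n + 1) → ℝ) →L[ℝ] _)) (Pi.single i 1) = dvg F (e.symm x) :=
      fun _ => rfl
    have hface : ∀ i (x : Fin n → ℝ),
        F (e.symm (Fin.insertNth (α := fun _ => ℝ) i 1 x)) i =
          F (e.symm (Fin.insertNth (α := fun _ => ℝ) i 0 x)) i := by
      intro i x
      have hshift : (fun j => ((Pi.single i 1 : Fin (n + 1) → ℤ) j : ℝ)) = Pi.single i 1 := by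
        ext j
        by_cases hj : j = i <;> simp [hj]
      have := hper i (e.symm (Fin.insertNth (α := fun _ => ℝ) i 0 x)) (Pi.single i 1)
      rw [hshift] at this
      rw [← zero_add (1 : ℝ), Fin.insertNth_add_eq_insertNth_add_single, map_add]
      exact this
    have hdiv := integral_divergence_of_hasFDerivAt_off_countable' 0 1 zero_le_one
      (fun i x => F (e.symm x) i) _ ∅ countable_empty
      (fun i => ((hFi i).continuous.comp e.symm.continuous).continuousOn)
      (fun x _ i => hderiv i x)
      (by simp only [hdvg]; exact (hF.continuous_dvg.comp e.symm.continuous).integrableOn_Icc)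
    simp only [hdvg] at hdiv
    simpa [hface] using hdiv

end Periodic

theorem setIntegral_unitCube_pos {ι : Type*} [Fintype ι] {g : (ι → ℝ) → ℝ} (hg : Continuous g)
    (hpos : ∀ x, 0 < g x) : 0 < ∫ x in Icc (0 : ι → ℝ) 1, g x := by
  refine (setIntegral_pos_iff_support_of_nonneg_ae (.of_forall fun x => (hpos x).le)
    (hg.continuousOn.integrableOn_compact isCompact_Icc)).2 ?_
  rw [Function.support_eq_univ fun x => (hpos x).ne', univ_inter, Real.volume_Icc_pi]
  simp

section CellProblem

variable {d : ℕ} {ψ ν1 ν2 φ1 φ2 : Euc d → ℝ} {lam : ℝ}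

def cellFlux (ψ φ1 φ2 : Euc d → ℝ) : Euc d → Euc d :=
  (fun y => Real.exp (-φ1 y) • (gradient ψ - gradient φ1) y) -
    fun y => Real.exp (-φ2 y) • gradient φ2 y

theorem contDiff_cellFlux (hψ : ContDiff ℝ 2 ψ) (h1 : ContDiff ℝ 2 φ1) (h2 : ContDiff ℝ 2 φ2) :
    ContDiff ℝ 1 (cellFlux ψ φ1 φ2) :=
  ((h1.of_le one_le_two).neg.exp.smul ((hψ.gradient (n := 1)).sub (h1.gradient (n := 1)))).sub
    ((h2.of_le one_le_two).neg.exp.smul (h2.gradient (n := 1)))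

theorem zPer_cellFlux (hψ : ZPer ψ) (h1 : ZPer φ1) (h2 : ZPer φ2) (i : Fin d) :
    ZPer fun y => cellFlux ψ φ1 φ2 y i := by
  intro x k
  simp only [cellFlux, Pi.sub_apply, hψ.gradient, h1.gradient, h2.gradient, h1 x k, h2 x k]

theorem IsCellSol.dvg_cellFlux (hψ : ContDiff ℝ 2 ψ) (h : IsCellSol ψ ν1 ν2 0 lam φ1 φ2)
    (x : Euc d) :
    dvg (cellFlux ψ φ1 φ2) x = lam * (Real.exp (-φ1 x) + Real.exp (-φ2 x)) := by
  obtain ⟨h1, h2, -, -, he1, he2⟩ := h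
  have h1' : ContDiff ℝ 2 φ1 := h1.of_le (by norm_cast)
  have h2' : ContDiff ℝ 2 φ2 := h2.of_le (by norm_cast)
  have hd1 : Differentiable ℝ φ1 := h1'.differentiable two_ne_zero
  have hd2 : Differentiable ℝ φ2 := h2'.differentiable two_ne_zero
  have hdψ := (hψ.gradient (n := 1)).differentiable one_ne_zero
  have hdφ1 := (h1'.gradient (n := 1)).differentiable one_ne_zero
  have hdφ2 := (h2'.gradient (n := 1)).differentiable one_ne_zero
  have hexp12 : Real.exp (-φ1 x) * Real.exp (φ1 x - φ2 x) = Real.exp (-φ2 x) := by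
    rw [← Real.exp_add]; ring_nf
  have hexp21 : Real.exp (-φ2 x) * Real.exp (φ2 x - φ1 x) = Real.exp (-φ1 x) := by
    rw [← Real.exp_add]; ring_nf
  have he1 := he1 x
  have he2 := he2 x
  rw [cellFlux, dvg_sub, dvg_smul, dvg_smul, dvg_sub, dvg_gradient, dvg_gradient, dvg_gradient,
    gradient_exp_neg, gradient_exp_neg]
  · simp only [add_zero, Pi.sub_apply, inner_neg_left, real_inner_smul_left, inner_sub_right,
      real_inner_self_eq_norm_sq] at he1 he2 ⊢
    rw [real_inner_comm] at he1
    linear_combination Real.exp (-φ1 x) * he1 + Real.exp (-φ2 x) * he2 - ν2 x * hexp12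
      - ν1 x * hexp21
  all_goals fun_prop

end CellProblem

theorem effective_hamiltonian_zero_at_zero_general
    {d : ℕ} (ψ ν1 ν2 : Euc d → ℝ) (hdata : GoodData ψ ν1 ν2)
    (Hbar : Euc d → ℝ)
    (hHbar : ∀ (p : Euc d) (lam : ℝ),
      (∃ φ1 φ2 : Euc d → ℝ, IsCellSol ψ ν1 ν2 p lam φ1 φ2) ↔ lam = Hbar p) :
    Hbar 0 = 0 := by
  obtain ⟨φ1, φ2, hsol⟩ := (hHbar 0 (Hbar 0)).2 rfl
  obtain ⟨hψ, -, -, hψper, -⟩ := hdata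
  have hψ2 : ContDiff ℝ 2 ψ := hψ.of_le (by norm_cast)
  have hdvg := hsol.dvg_cellFlux hψ2
  obtain ⟨hφ1, hφ2, hper1, hper2, -⟩ := hsol
  have hflux := integral_unitCube_dvg_eq_zero_of_zPer
    (contDiff_cellFlux hψ2 (hφ1.of_le (by norm_cast)) (hφ2.of_le (by norm_cast)))
    (zPer_cellFlux hψper hper1 hper2)
  simp only [hdvg, integral_const_mul] at hflux
  have hc1 := hφ1.continuous
  have hc2 := hφ2.continuous
  exact (mul_eq_zero.1 hflux).resolve_right
    (setIntegral_unitCube_pos (by fun_prop) fun x => by positivity).ne'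

/-- **Lemma 2.1.** The effective Hamiltonian satisfies `H̄(0) = 0`. -/
theorem effective_hamiltonian_zero_at_zero
    {d : ℕ} (hd : 1 ≤ d) (ψ ν1 ν2 : Euc d → ℝ) (hdata : GoodData ψ ν1 ν2)
    (Hbar : Euc d → ℝ)
    (hHbar : ∀ (p : Euc d) (lam : ℝ),
      (∃ φ1 φ2 : Euc d → ℝ, IsCellSol ψ ν1 ν2 p lam φ1 φ2) ↔ lam = Hbar p) :
    Hbar 0 = 0 :=
  effective_hamiltonian_zero_at_zero_general ψ ν1 ν2 hdata Hbar hHbar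

end
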